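/- arXiv:2203.01237 — 5 statements merged into one kernel-verified Lean document; each statement's English description precedes it below -/
import Mathlib

section
/- Let M=(W,R,v₁,v₂) be a KG² model on a crisp frame. Define a new pair of valuations v*₁, v*₂ on the same frame by v*₁(p,w) = 1 − v₂(p,w) and v*₂(p,w) = 1 − v₁(p,w) for every propositional variable p and world w. Then for every formula φ of biL¬_{□,◇} and every world w ∈ W: v*₁(φ,w) = 1 − v₂(φ,w) and v*₂(φ,w) = 1 − v₁(φ,w). -/
/- Truth values: the real unit interval [0,1] with its complete lattice structure
   (so `sInf ∅ = 1` and `sSup ∅ = 0`). -/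
instance : Fact ((0:ℝ) ≤ 1) := ⟨zero_le_one⟩

abbrev TV : Type := unitInterval

/-- Gödel implication: `a →G b = 1` if `a ≤ b`, else `b`. -/
noncomputable def gimp (a b : TV) : TV := if a ≤ b then 1 else b

/-- Gödel coimplication: `a ⧀G b = 0` if `a ≤ b`, else `a`. -/
noncomputable def gcoimp (a b : TV) : TV := if a ≤ b then 0 else a

/-- Formulas of `biL¬_{□,◇}` over the countable variable set `ℕ`. -/
inductive Formula : Type
  | var : ℕ → Formula
  | neg : Formula → Formula
  | and : Formula → Formula → Formula
  | or : Formula → Formula → Formula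
  | imp : Formula → Formula → Formula
  | coimp : Formula → Formula → Formula
  | box : Formula → Formula
  | dia : Formula → Formula

/-- KG² valuation pair `(v₁, v₂)` on a crisp frame `(W, R)`:
`(kval R v φ w).1 = v₁(φ,w)` and `(kval R v φ w).2 = v₂(φ,w)`. -/
noncomputable def kval {W : Type} (R : W → W → Prop) (v : ℕ → W → TV × TV) :
    Formula → W → TV × TV
  | .var p, w => v p w
  | .neg φ, w => ((kval R v φ w).2, (kval R v φ w).1)
  | .and φ ψ, w => ((kval R v φ w).1 ⊓ (kval R v ψ w).1, (kval R v φ w).2 ⊔ (kval R v ψ w).2)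
  | .or φ ψ, w => ((kval R v φ w).1 ⊔ (kval R v ψ w).1, (kval R v φ w).2 ⊓ (kval R v ψ w).2)
  | .imp φ ψ, w =>
      (gimp (kval R v φ w).1 (kval R v ψ w).1, gcoimp (kval R v ψ w).2 (kval R v φ w).2)
  | .coimp φ ψ, w =>
      (gcoimp (kval R v φ w).1 (kval R v ψ w).1, gimp (kval R v ψ w).2 (kval R v φ w).2)
  | .box φ, w =>
      (sInf ((fun w' => (kval R v φ w').1) '' {w' | R w w'}),
       sSup ((fun w' => (kval R v φ w').2) '' {w' | R w w'}))
  | .dia φ, w =>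
      (sSup ((fun w' => (kval R v φ w').1) '' {w' | R w w'}),
       sInf ((fun w' => (kval R v φ w').2) '' {w' | R w w'}))

/-! The map `x ↦ 1 - x` is an order-reversing involution of `[0,1]`: it exchanges `⊓` with `⊔`,
`sInf` with `sSup`, and Gödel implication with coimplication (arguments swapped). These are
exactly the exchanges by which the clauses for `v₂` dualise those for `v₁`, so the claim
follows by induction on the formula. -/

open unitInterval

namespace unitInterval

noncomputable def symmOrderIso : I ≃o Iᵒᵈ where
  toFun x := OrderDual.toDual (σ x)
  invFun x := σ (OrderDual.ofDual x)
  left_inv := symm_symm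
  right_inv := symm_symm
  map_rel_iff' := symm_le_symm

lemma symm_inf (a b : I) : σ (a ⊓ b) = σ a ⊔ σ b :=
  symmOrderIso.map_inf a b

lemma symm_sup (a b : I) : σ (a ⊔ b) = σ a ⊓ σ b :=
  symmOrderIso.map_sup a b

lemma symm_sInf_image {α : Type*} (f : α → I) (s : Set α) :
    σ (sInf (f '' s)) = sSup ((σ ∘ f) '' s) := by
  rw [sInf_image, sSup_image]
  exact symmOrderIso.map_iInf₂ _

lemma symm_sSup_image {α : Type*} (f : α → I) (s : Set α) :
    σ (sSup (f '' s)) = sInf ((σ ∘ f) '' s) := by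
  rw [sInf_image, sSup_image]
  exact symmOrderIso.map_iSup₂ _

end unitInterval

lemma symm_gimp (a b : TV) : σ (gimp a b) = gcoimp (σ b) (σ a) := by
  by_cases h : a ≤ b <;> simp [gimp, gcoimp, h, symm_le_symm]

lemma symm_gcoimp (a b : TV) : σ (gcoimp a b) = gimp (σ b) (σ a) := by
  by_cases h : a ≤ b <;> simp [gimp, gcoimp, h, symm_le_symm]

theorem stmt0_general {W : Type} (R : W → W → Prop)
    (v vstar : ℕ → W → TV × TV)
    (hstar : ∀ p w, vstar p w = (unitInterval.symm (v p w).2, unitInterval.symm (v p w).1))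
    (φ : Formula) (w : W) :
    (kval R vstar φ w).1 = unitInterval.symm (kval R v φ w).2 ∧
    (kval R vstar φ w).2 = unitInterval.symm (kval R v φ w).1 := by
  induction φ generalizing w with
  | var p => simp [kval, hstar]
  | neg φ ih => exact (ih w).symm
  | and φ ψ ihφ ihψ | or φ ψ ihφ ihψ | imp φ ψ ihφ ihψ | coimp φ ψ ihφ ihψ =>
    simp only [kval, ihφ, ihψ, symm_inf, symm_sup, symm_gimp, symm_gcoimp, and_self]
  | box φ ih | dia φ ih =>
    simp only [kval, ih, symm_sInf_image, symm_sSup_image, Function.comp_def, and_self]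

/-- flipping a KG² model by `v*₁(p,w) = 1 − v₂(p,w)`, `v*₂(p,w) = 1 − v₁(p,w)`
propagates to all formulas (here `unitInterval.symm x = 1 - x`). -/
theorem stmt0 {W : Type} [Nonempty W] (R : W → W → Prop)
    (v vstar : ℕ → W → TV × TV)
    (hstar : ∀ p w, vstar p w = (unitInterval.symm (v p w).2, unitInterval.symm (v p w).1))
    (φ : Formula) (w : W) :
    (kval R vstar φ w).1 = unitInterval.symm (kval R v φ w).2 ∧
    (kval R vstar φ w).2 = unitInterval.symm (kval R v φ w).1 :=
  stmt0_general R v vstar hstar φ w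
end

section
/- A crisp frame F=(W,R) is finitely branching (i.e. R(w)={w' : wRw'} is finite for every w ∈ W) if and only if F ⊨_{KbiG} 𝟏 ⧀ ◇((p ⧀ q) ∧ q). -/
/-- ¬-free formulas: the language `biL_{□,◇}` over the countable variable set `ℕ`. -/
inductive FormulaB : Type
  | var : ℕ → FormulaB
  | and : FormulaB → FormulaB → FormulaB
  | or : FormulaB → FormulaB → FormulaB
  | imp : FormulaB → FormulaB → FormulaB
  | coimp : FormulaB → FormulaB → FormulaB
  | box : FormulaB → FormulaB
  | dia : FormulaB → FormulaB

/-- KbiG valuation on a crisp frame `(W, R)` (`inf ∅ = 1`, `sup ∅ = 0`). -/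
noncomputable def bval {W : Type} (R : W → W → Prop) (v : ℕ → W → TV) :
    FormulaB → W → TV
  | .var p, w => v p w
  | .and φ ψ, w => bval R v φ w ⊓ bval R v ψ w
  | .or φ ψ, w => bval R v φ w ⊔ bval R v ψ w
  | .imp φ ψ, w => gimp (bval R v φ w) (bval R v ψ w)
  | .coimp φ ψ, w => gcoimp (bval R v φ w) (bval R v ψ w)
  | .box φ, w => sInf ((fun w' => bval R v φ w') '' {w' | R w w'})
  | .dia φ, w => sSup ((fun w' => bval R v φ w') '' {w' | R w w'})

/-- `𝟏 := p → p`. -/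
def bone : FormulaB := .imp (.var 0) (.var 0)

/-- `𝟎 := p ⧀ p`. -/
def bzero : FormulaB := .coimp (.var 0) (.var 0)

/-- Gödel negation `∼φ := φ → 𝟎`. -/
def bnegG (φ : FormulaB) : FormulaB := .imp φ bzero

/-- Baaz delta `Δτ := ∼(𝟏 ⧀ τ)`. -/
def bDelta (τ : FormulaB) : FormulaB := bnegG (.coimp bone τ)

/-- The formula `𝟏 ⧀ ◇((p ⧀ q) ∧ q)` with `p := var 0`, `q := var 1`. -/
def phiFin : FormulaB := .coimp bone (.dia (.and (.coimp (.var 0) (.var 1)) (.var 1)))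


/-! At a world `w`, `𝟏 ⧀ ◇((p ⧀ q) ∧ q)` takes the value `1` exactly when the supremum of the
values of `(p ⧀ q) ∧ q` over the successors of `w` is below `1`. Each of these values is below `1`
(it is `0` when `p ≤ q` and `q < p ≤ 1` otherwise), so a supremum over finitely many successors is
below `1` as well. Over infinitely many successors, take `p = 1` and let `q` run through the values
`n / (n + 1)`: then `(p ⧀ q) ∧ q` equals `q`, whose supremum is `1`. -/

theorem Set.Finite.sSup_lt {α : Type*} [CompleteLinearOrder α] {s : Set α} {a : α}
    (hs : s.Finite) (ha : ⊥ < a) (h : ∀ x ∈ s, x < a) : sSup s < a := by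
  rcases s.eq_empty_or_nonempty with rfl | hne
  · rwa [sSup_empty]
  · exact h _ (hne.csSup_mem hs)

lemma gcoimp_one_eq_one_iff (x : TV) : gcoimp 1 x = 1 ↔ x < 1 := by
  unfold gcoimp
  split_ifs with h
  · simp [h.not_gt]
  · simpa using h

lemma gcoimp_inf_lt_one (a b : TV) : gcoimp a b ⊓ b < 1 := by
  unfold gcoimp
  split_ifs with h
  · simp
  · exact inf_le_right.trans_lt ((not_le.mp h).trans_le le_top)

lemma bval_bone {W : Type} (R : W → W → Prop) (v : ℕ → W → TV) (w : W) :
    bval R v bone w = 1 := by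
  simp [bone, bval, gimp]

lemma bval_phiFin {W : Type} (R : W → W → Prop) (v : ℕ → W → TV) (w : W) :
    bval R v phiFin w =
      gcoimp 1 (sSup ((fun u => gcoimp (v 0 u) (v 1 u) ⊓ v 1 u) '' {u | R w u})) := by
  rw [← bval_bone R v w]
  rfl

noncomputable def approxOne (n : ℕ) : unitInterval :=
  ⟨n / (n + 1), unitInterval.div_mem n.cast_nonneg (by positivity) (by linarith)⟩

lemma approxOne_lt_one (n : ℕ) : approxOne n < 1 := by
  rw [← Subtype.coe_lt_coe]
  exact (div_lt_one (by positivity)).mpr (lt_add_one _)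

lemma one_le_of_forall_approxOne_le {x : unitInterval} (h : ∀ n, approxOne n ≤ x) : 1 ≤ x :=
  Subtype.coe_le_coe.mp <| le_of_tendsto' (tendsto_natCast_div_add_atTop (1 : ℝ)) fun n ↦
    Subtype.coe_le_coe.mpr (h n)

lemma Set.Infinite.exists_lt_one_sSup_image_eq_one {W : Type*} {s : Set W} (hs : s.Infinite) :
    ∃ q : W → unitInterval, (∀ u, q u < 1) ∧ sSup (q '' s) = 1 := by
  set f : ℕ → W := fun n ↦ hs.natEmbedding s n
  have hf : f.Injective := Subtype.val_injective.comp (hs.natEmbedding s).injective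
  refine ⟨Function.extend f approxOne 0, fun u ↦ ?_, ?_⟩
  · by_cases hu : ∃ n, f n = u
    · obtain ⟨n, rfl⟩ := hu
      rw [hf.extend_apply]
      exact approxOne_lt_one n
    · rw [Function.extend_apply' _ _ _ hu]
      exact zero_lt_one
  · refine le_antisymm le_top (one_le_of_forall_approxOne_le fun n ↦ ?_)
    rw [← hf.extend_apply approxOne 0 n]
    exact le_sSup ⟨f n, (hs.natEmbedding s n).2, rfl⟩

theorem stmt3_general {W : Type} (R : W → W → Prop) :
    (∀ w : W, {w' | R w w'}.Finite) ↔
    (∀ (v : ℕ → W → TV) (w : W), bval R v phiFin w = 1) := by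
  simp only [bval_phiFin, gcoimp_one_eq_one_iff]
  refine ⟨fun hfin v w ↦ ?_, fun hval w ↦ ?_⟩
  · exact ((hfin w).image _).sSup_lt bot_lt_top (by
      rintro _ ⟨u, -, rfl⟩
      exact gcoimp_inf_lt_one _ _)
  · by_contra hinf
    obtain ⟨q, hq_lt, hq_sSup⟩ := Set.Infinite.exists_lt_one_sSup_image_eq_one hinf
    have hval_q := hval (fun i u ↦ if i = 0 then 1 else q u) w
    have hcoimp_q : ∀ u, gcoimp 1 (q u) ⊓ q u = q u := fun u ↦ by
      rw [(gcoimp_one_eq_one_iff _).mpr (hq_lt u), inf_eq_right.mpr (hq_lt u).le]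
    simp only [↓reduceIte, one_ne_zero, hcoimp_q] at hval_q
    exact hval_q.ne hq_sSup

/-- a crisp frame is finitely branching iff it validates `𝟏 ⧀ ◇((p ⧀ q) ∧ q)`. -/
theorem stmt3 {W : Type} [Nonempty W] (R : W → W → Prop) :
    (∀ w : W, {w' | R w w'}.Finite) ↔
    (∀ (v : ℕ → W → TV) (w : W), bval R v phiFin w = 1) :=
  stmt3_general R
end

section
/- A crisp frame F=(W,R) is finitely branching (i.e. R(w)={w' : wRw'} is finite for every w ∈ W) if and only if F ⊨_{KbiG} ∼∼□(p ∨ ∼p), where ∼φ := φ→𝟎. Hence finitely branching crisp frames are definable in the □-fragment without coimplication. -/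
/-
Over a finite set of successors the infimum defining `□(p ∨ ∼p)` is a minimum, and `p ∨ ∼p` never
takes the value `0`, so `□(p ∨ ∼p)` is positive and `∼∼□(p ∨ ∼p)` is `1`. Over infinitely many
successors, give `p` the values `1, 1/2, 1/3, …` on them: then `p ∨ ∼p` agrees with `p` there, its
infimum is `0`, and `∼∼□(p ∨ ∼p)` is `0`.
-/

theorem Set.Finite.sInf_ne_bot {α : Type*} [CompleteLinearOrder α] [Nontrivial α] {s : Set α}
    (hs : s.Finite) (hbot : ⊥ ∉ s) : sInf s ≠ ⊥ := by
  rcases s.eq_empty_or_nonempty with rfl | hne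
  · simp
  · exact fun h => hbot (h ▸ hne.csInf_mem hs)

theorem unitInterval.exists_forall_ne_zero_iInf_eq_zero :
    ∃ t : ℕ → unitInterval, (∀ n, t n ≠ 0) ∧ ⨅ n, t n = 0 := by
  let t : ℕ → unitInterval := fun n =>
    ⟨1 / (n + 1), div_mem zero_le_one n.cast_add_one_pos.le (by simp)⟩
  refine ⟨t, fun n h => ?_, le_antisymm ?_ bot_le⟩
  · exact Nat.cast_add_one_ne_zero (R := ℝ) n (by simpa [t] using congrArg Subtype.val h)
  · rw [← Subtype.coe_le_coe]
    exact ge_of_tendsto' tendsto_one_div_add_atTop_nhds_zero_nat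
      fun n => Subtype.coe_le_coe.mpr (iInf_le t n)

theorem Set.Infinite.exists_forall_ne_zero_sInf_image_eq_zero {W : Type*} {s : Set W}
    (hs : s.Infinite) : ∃ f : W → unitInterval, (∀ x, f x ≠ 0) ∧ sInf (f '' s) = 0 := by
  obtain ⟨t, ht, ht_inf⟩ := unitInterval.exists_forall_ne_zero_iInf_eq_zero
  let g := hs.natEmbedding _
  let e : ℕ → W := fun n => g n
  have he : e.Injective := Subtype.coe_injective.comp g.injective
  refine ⟨Function.extend e t 1, fun x => ?_, le_antisymm ?_ bot_le⟩
  · by_cases hx : ∃ n, e n = x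
    · obtain ⟨n, rfl⟩ := hx
      rw [he.extend_apply]
      exact ht n
    · rw [Function.extend_apply' _ _ _ hx]
      exact one_ne_zero
  · rw [← ht_inf]
    exact le_iInf fun n => sInf_le ⟨e n, (g n).2, he.extend_apply t 1 n⟩

section KbiG

variable {W : Type} (R : W → W → Prop) (v : ℕ → W → TV)

theorem bval_bzero (w : W) : bval R v bzero w = 0 := by
  simp [bval, bzero, gcoimp]

theorem bval_bnegG (φ : FormulaB) (w : W) :
    bval R v (bnegG φ) w = if bval R v φ w = 0 then 1 else 0 := by
  simp only [bnegG, bval, bval_bzero, gimp, le_zero_iff]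

theorem bval_bnegG_bnegG_eq_one_iff (φ : FormulaB) (w : W) :
    bval R v (bnegG (bnegG φ)) w = 1 ↔ bval R v φ w ≠ 0 := by
  by_cases h : bval R v φ w = 0 <;> simp [bval_bnegG, h]

theorem bval_or_bnegG_self (φ : FormulaB) (w : W) :
    bval R v (.or φ (bnegG φ)) w = if bval R v φ w = 0 then 1 else bval R v φ w := by
  by_cases h : bval R v φ w = 0 <;> simp [bval, bval_bnegG, h]

theorem bval_or_bnegG_self_ne_zero (φ : FormulaB) (w : W) :
    bval R v (.or φ (bnegG φ)) w ≠ 0 := by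
  rw [bval_or_bnegG_self]
  split_ifs with h
  · exact one_ne_zero
  · exact h

theorem bval_box_ne_zero_of_finite {φ : FormulaB} {w : W} (hfin : {w' | R w w'}.Finite)
    (hφ : ∀ w', R w w' → bval R v φ w' ≠ 0) : bval R v (.box φ) w ≠ 0 :=
  (hfin.image _).sInf_ne_bot fun ⟨w', hw', h0⟩ => hφ w' hw' h0

theorem exists_bval_box_or_bnegG_var_eq_zero_of_infinite {w : W} (p : ℕ)
    (hinf : {w' | R w w'}.Infinite) :
    ∃ v : ℕ → W → TV, bval R v (.box (.or (.var p) (bnegG (.var p)))) w = 0 := by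
  obtain ⟨f, hf, hf_inf⟩ := hinf.exists_forall_ne_zero_sInf_image_eq_zero
  refine ⟨fun _ => f, ?_⟩
  have h_eq : ∀ w', bval R (fun _ => f) (.or (.var p) (bnegG (.var p))) w' = f w' := fun w' =>
    (bval_or_bnegG_self R _ _ w').trans (if_neg (hf w'))
  rw [bval]
  simpa only [h_eq] using hf_inf

end KbiG

theorem stmt6_general {W : Type} (R : W → W → Prop) :
    (∀ w : W, {w' | R w w'}.Finite) ↔
    (∀ (v : ℕ → W → TV) (w : W),
      bval R v (bnegG (bnegG (.box (.or (.var 0) (bnegG (.var 0)))))) w = 1) := by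
  simp only [bval_bnegG_bnegG_eq_one_iff]
  refine ⟨fun hfin v w => bval_box_ne_zero_of_finite R v (hfin w)
    fun w' _ => bval_or_bnegG_self_ne_zero R v _ w', fun hval w => ?_⟩
  by_contra hinf
  obtain ⟨v, hv⟩ := exists_bval_box_or_bnegG_var_eq_zero_of_infinite R 0 hinf
  exact hval v w hv

/-- a crisp frame is finitely branching iff it validates `∼∼□(p ∨ ∼p)`. -/
theorem stmt6 {W : Type} [Nonempty W] (R : W → W → Prop) :
    (∀ w : W, {w' | R w w'}.Finite) ↔
    (∀ (v : ℕ → W → TV) (w : W),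
      bval R v (bnegG (bnegG (.box (.or (.var 0) (bnegG (.var 0)))))) w = 1) :=
  stmt6_general R
end

section
/- □ and ◇ are not interdefinable over finitely branching crisp frames: there is no ◇-free formula ψ of biL_{□,◇} in the single variable p such that v(ψ,w)=v(◇p,w) for every KbiG model on a finitely branching crisp frame and every world w, and there is no □-free formula χ of biL_{□,◇} in the single variable p such that v(χ,w)=v(□p,w) for every KbiG model on a finitely branching crisp frame and every world w. -/
/-- `φ` contains no `◇`. -/
def FormulaB.diaFree : FormulaB → Prop
  | .var _ => True
  | .and φ ψ => φ.diaFree ∧ ψ.diaFree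
  | .or φ ψ => φ.diaFree ∧ ψ.diaFree
  | .imp φ ψ => φ.diaFree ∧ ψ.diaFree
  | .coimp φ ψ => φ.diaFree ∧ ψ.diaFree
  | .box φ => φ.diaFree
  | .dia _ => False

/-- `φ` contains no `□`. -/
def FormulaB.boxFree : FormulaB → Prop
  | .var _ => True
  | .and φ ψ => φ.boxFree ∧ ψ.boxFree
  | .or φ ψ => φ.boxFree ∧ ψ.boxFree
  | .imp φ ψ => φ.boxFree ∧ ψ.boxFree
  | .coimp φ ψ => φ.boxFree ∧ ψ.boxFree
  | .box _ => False
  | .dia φ => φ.boxFree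

/-- `φ` uses only the propositional variable `p`. -/
def FormulaB.onlyVar (p : ℕ) : FormulaB → Prop
  | .var q => q = p
  | .and φ ψ => φ.onlyVar p ∧ ψ.onlyVar p
  | .or φ ψ => φ.onlyVar p ∧ ψ.onlyVar p
  | .imp φ ψ => φ.onlyVar p ∧ ψ.onlyVar p
  | .coimp φ ψ => φ.onlyVar p ∧ ψ.onlyVar p
  | .box φ => φ.onlyVar p
  | .dia φ => φ.onlyVar p

/-!
Take a root seeing two dead ends, with `p` worth `1/4` at the first and `√(1/4) = 1/2` at the
second. A strictly monotone map of `[0,1]` fixing `0` and `1` commutes with the bi-Gödel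
connectives, so a formula worth `x` at the first dead end is worth `√x ≥ x` at the second;
hence `□φ` at the root takes the value of `φ` at the first dead end and `◇φ` that at the second.
Every subset of `[0,1]` containing `0` and `1` is closed under the connectives, so the
◇-free formulas only take the values `0, 1/4, 1` at the root and the □-free ones only
`0, 1/2, 1`, while `◇p` is worth `1/2` and `□p` is worth `1/4` there.
-/

section Connectives

variable {T : Set TV} {a b : TV}

lemma gimp_mem (h1 : 1 ∈ T) (hb : b ∈ T) : gimp a b ∈ T := by
  unfold gimp; split_ifs <;> assumption

lemma gcoimp_mem (h0 : 0 ∈ T) (ha : a ∈ T) : gcoimp a b ∈ T := by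
  unfold gcoimp; split_ifs <;> assumption

lemma StrictMono.map_gimp {g : TV → TV} (hg : StrictMono g) (g1 : g 1 = 1) :
    g (gimp a b) = gimp (g a) (g b) := by
  by_cases h : a ≤ b <;> simp [gimp, h, hg.le_iff_le, g1]

lemma StrictMono.map_gcoimp {g : TV → TV} (hg : StrictMono g) (g0 : g 0 = 0) :
    g (gcoimp a b) = gcoimp (g a) (g b) := by
  by_cases h : a ≤ b <;> simp [gcoimp, h, hg.le_iff_le, g0]

end Connectives

section Valuation

variable {W : Type} {R : W → W → Prop} {v : ℕ → W → TV} {w : W}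

lemma bval_box_of_forall_not_rel (hw : ∀ x, ¬ R w x) (φ : FormulaB) :
    bval R v (.box φ) w = 1 := by
  simp [bval, hw]; rfl

lemma bval_dia_of_forall_not_rel (hw : ∀ x, ¬ R w x) (φ : FormulaB) :
    bval R v (.dia φ) w = 0 := by
  simp [bval, hw]; rfl

lemma bval_eq_map_of_forall_not_rel {u : W} {g : TV → TV} (hg : StrictMono g) (g0 : g 0 = 0)
    (g1 : g 1 = 1) (hu : ∀ x, ¬ R u x) (hw : ∀ x, ¬ R w x) (hv : ∀ p, v p w = g (v p u)) :
    ∀ φ, bval R v φ w = g (bval R v φ u)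
  | .var p => hv p
  | .and φ ψ => by
    simp only [bval, hg.monotone.map_inf, bval_eq_map_of_forall_not_rel hg g0 g1 hu hw hv]
  | .or φ ψ => by
    simp only [bval, hg.monotone.map_sup, bval_eq_map_of_forall_not_rel hg g0 g1 hu hw hv]
  | .imp φ ψ => by
    simp only [bval, hg.map_gimp g1, bval_eq_map_of_forall_not_rel hg g0 g1 hu hw hv]
  | .coimp φ ψ => by
    simp only [bval, hg.map_gcoimp g0, bval_eq_map_of_forall_not_rel hg g0 g1 hu hw hv]
  | .box φ => by rw [bval_box_of_forall_not_rel hu, bval_box_of_forall_not_rel hw, g1]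
  | .dia φ => by rw [bval_dia_of_forall_not_rel hu, bval_dia_of_forall_not_rel hw, g0]

variable {T : Set TV} (h0 : 0 ∈ T) (h1 : 1 ∈ T) (hvar : ∀ p, v p w ∈ T)
include h0 h1 hvar

lemma bval_mem_of_diaFree (hbox : ∀ φ : FormulaB, φ.diaFree → bval R v (.box φ) w ∈ T) :
    ∀ ψ : FormulaB, ψ.diaFree → bval R v ψ w ∈ T
  | .var p, _ => hvar p
  | .and φ ψ, ⟨hφ, hψ⟩ => inf_ind _ _ (bval_mem_of_diaFree hbox φ hφ) (bval_mem_of_diaFree hbox ψ hψ)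
  | .or φ ψ, ⟨hφ, hψ⟩ => sup_ind _ _ (bval_mem_of_diaFree hbox φ hφ) (bval_mem_of_diaFree hbox ψ hψ)
  | .imp _ ψ, ⟨_, hψ⟩ => gimp_mem h1 (bval_mem_of_diaFree hbox ψ hψ)
  | .coimp φ _, ⟨hφ, _⟩ => gcoimp_mem h0 (bval_mem_of_diaFree hbox φ hφ)
  | .box φ, hφ => hbox φ hφ

lemma bval_mem_of_boxFree (hdia : ∀ φ : FormulaB, φ.boxFree → bval R v (.dia φ) w ∈ T) :
    ∀ ψ : FormulaB, ψ.boxFree → bval R v ψ w ∈ T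
  | .var p, _ => hvar p
  | .and φ ψ, ⟨hφ, hψ⟩ => inf_ind _ _ (bval_mem_of_boxFree hdia φ hφ) (bval_mem_of_boxFree hdia ψ hψ)
  | .or φ ψ, ⟨hφ, hψ⟩ => sup_ind _ _ (bval_mem_of_boxFree hdia φ hφ) (bval_mem_of_boxFree hdia ψ hψ)
  | .imp _ ψ, ⟨_, hψ⟩ => gimp_mem h1 (bval_mem_of_boxFree hdia ψ hψ)
  | .coimp φ _, ⟨hφ, _⟩ => gcoimp_mem h0 (bval_mem_of_boxFree hdia φ hφ)
  | .dia φ, hφ => hdia φ hφ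

end Valuation

namespace Countermodel

noncomputable def sqrt (x : TV) : TV := ⟨√x, Real.sqrt_nonneg _, Real.sqrt_le_one.mpr x.2.2⟩

lemma strictMono_sqrt : StrictMono sqrt := fun x _ h => Real.sqrt_lt_sqrt x.2.1 h

lemma le_sqrt (x : TV) : x ≤ sqrt x :=
  (Real.le_sqrt x.2.1 x.2.1).mpr (pow_le_of_le_one x.2.1 x.2.2 two_ne_zero)

lemma sqrt_zero : sqrt 0 = 0 := Subtype.ext Real.sqrt_zero

lemma sqrt_one : sqrt 1 = 1 := Subtype.ext Real.sqrt_one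

noncomputable def quarter : TV := ⟨1 / 4, by norm_num, by norm_num⟩

noncomputable def half : TV := ⟨1 / 2, by norm_num, by norm_num⟩

lemma sqrt_quarter : sqrt quarter = half := by
  refine Subtype.ext (Real.sqrt_eq_iff_eq_sq ?_ ?_ |>.mpr ?_) <;> norm_num [quarter, half]

def frame (x y : Fin 3) : Prop := x = 0 ∧ y ≠ 0

noncomputable def val (_ : ℕ) (w : Fin 3) : TV :=
  if w = 1 then quarter else if w = 2 then half else 0

lemma frame_root : {y | frame 0 y} = {1, 2} := by
  ext y; fin_cases y <;> simp [frame]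

lemma not_frame_one (y : Fin 3) : ¬ frame 1 y := by simp [frame]

lemma not_frame_two (y : Fin 3) : ¬ frame 2 y := by simp [frame]

lemma bval_two (φ : FormulaB) : bval frame val φ 2 = sqrt (bval frame val φ 1) :=
  bval_eq_map_of_forall_not_rel strictMono_sqrt sqrt_zero sqrt_one not_frame_one not_frame_two
    (fun _ => by simp [val, sqrt_quarter]) φ

lemma bval_box_root (φ : FormulaB) : bval frame val (.box φ) 0 = bval frame val φ 1 := by
  simp only [bval, frame_root, Set.image_pair, sInf_pair, bval_two]
  exact inf_eq_left.mpr (le_sqrt _)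

lemma bval_dia_root (φ : FormulaB) : bval frame val (.dia φ) 0 = bval frame val φ 2 := by
  simp only [bval, frame_root, Set.image_pair, sSup_pair, bval_two]
  exact sup_eq_right.mpr (le_sqrt _)

lemma bval_root_mem_of_diaFree (ψ : FormulaB) (hψ : ψ.diaFree) :
    bval frame val ψ 0 ∈ ({0, quarter, 1} : Set TV) := by
  have hvar (w : Fin 3) (hw : w ≠ 2) (p : ℕ) : val p w ∈ ({0, quarter, 1} : Set TV) := by
    fin_cases w <;> simp_all [val]
  refine bval_mem_of_diaFree (by simp) (by simp) (hvar 0 (by decide)) (fun φ hφ => ?_) ψ hψ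
  rw [bval_box_root]
  exact bval_mem_of_diaFree (by simp) (by simp) (hvar 1 (by decide))
    (fun φ _ => by simp [bval_box_of_forall_not_rel not_frame_one]) φ hφ

lemma bval_root_mem_of_boxFree (χ : FormulaB) (hχ : χ.boxFree) :
    bval frame val χ 0 ∈ ({0, half, 1} : Set TV) := by
  have hvar (w : Fin 3) (hw : w ≠ 1) (p : ℕ) : val p w ∈ ({0, half, 1} : Set TV) := by
    fin_cases w <;> simp_all [val]
  refine bval_mem_of_boxFree (by simp) (by simp) (hvar 0 (by decide)) (fun φ hφ => ?_) χ hχ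
  rw [bval_dia_root]
  exact bval_mem_of_boxFree (by simp) (by simp) (hvar 2 (by decide))
    (fun φ _ => by simp [bval_dia_of_forall_not_rel not_frame_two]) φ hφ

lemma half_not_mem : half ∉ ({0, quarter, 1} : Set TV) := by
  simp [Subtype.ext_iff, quarter, half]

lemma quarter_not_mem : quarter ∉ ({0, half, 1} : Set TV) := by
  simp [Subtype.ext_iff, quarter, half]

end Countermodel

open Countermodel in
/-- over finitely branching crisp frames, no ◇-free formula in the single
variable `p` is equivalent to `◇p`, and no □-free formula in `p` is equivalent to `□p`. -/
theorem stmt7 :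
    (¬ ∃ ψ : FormulaB, ψ.diaFree ∧ ψ.onlyVar 0 ∧
      ∀ (W : Type), Nonempty W → ∀ (R : W → W → Prop),
        (∀ w : W, {w' | R w w'}.Finite) →
        ∀ (v : ℕ → W → TV) (w : W), bval R v ψ w = bval R v (.dia (.var 0)) w) ∧
    (¬ ∃ χ : FormulaB, χ.boxFree ∧ χ.onlyVar 0 ∧
      ∀ (W : Type), Nonempty W → ∀ (R : W → W → Prop),
        (∀ w : W, {w' | R w w'}.Finite) →
        ∀ (v : ℕ → W → TV) (w : W), bval R v χ w = bval R v (.box (.var 0)) w) := by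
  constructor
  · rintro ⟨ψ, hψ, -, h⟩
    have hmem := bval_root_mem_of_diaFree ψ hψ
    rw [h (Fin 3) ⟨0⟩ frame (fun _ => Set.toFinite _) val 0, bval_dia_root] at hmem
    exact half_not_mem hmem
  · rintro ⟨χ, hχ, -, h⟩
    have hmem := bval_root_mem_of_boxFree χ hχ
    rw [h (Fin 3) ⟨0⟩ frame (fun _ => Set.toFinite _) val 0, bval_box_root] at hmem
    exact quarter_not_mem hmem
end

section
/- Let Δ^¬φ := ∼(𝟏 ⧀ φ) ∧ ¬∼∼(𝟏 ⧀ φ). The formula Δ^¬(p→q) ∨ Δ^¬(q→p) is not KG²-valid: in any KG² model with v₁(p,w)=0.7, v₂(p,w)=0.6, v₁(q,w)=0.4, v₂(q,w)=0.2 one has (v₁(Δ^¬(p→q) ∨ Δ^¬(q→p), w), v₂(Δ^¬(p→q) ∨ Δ^¬(q→p), w)) = (0,1) ≠ (1,0). -/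
/-- `𝟏 := p → p`. -/
def fone : Formula := .imp (.var 0) (.var 0)

/-- `𝟎 := p ⧀ p`. -/
def fzero : Formula := .coimp (.var 0) (.var 0)

/-- Gödel negation `∼φ := φ → 𝟎`. -/
def fnegG (φ : Formula) : Formula := .imp φ fzero

/-- `Δ^¬φ := ∼(𝟏 ⧀ φ) ∧ ¬∼∼(𝟏 ⧀ φ)`. -/
def fDeltaNeg (φ : Formula) : Formula :=
  .and (fnegG (.coimp fone φ)) (.neg (fnegG (fnegG (.coimp fone φ))))

/-! `Δ^¬` is a crisp designation test: `Δ^¬φ` takes the value `(1,0)` when `φ` does and `(0,1)`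
otherwise. Under the given valuation neither `p → q` (as `v₁ p > v₁ q`) nor `q → p` (as
`v₂ p > v₂ q`) is designated, so both disjuncts, and hence the disjunction, take the value `(0,1)`;
a one-world model with these values refutes validity. -/

section GoedelOperations

variable {a b : TV}

lemma gimp_eq_one_iff : gimp a b = 1 ↔ a ≤ b := by
  unfold gimp
  split_ifs with h
  · simp [h]
  · exact iff_of_false (fun hb => h (hb ▸ unitInterval.le_one')) h

lemma gcoimp_eq_zero_iff : gcoimp a b = 0 ↔ a ≤ b := by
  unfold gcoimp
  split_ifs with h
  · simp [h]
  · exact iff_of_false (fun ha => h (ha ▸ unitInterval.nonneg')) h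

lemma gimp_self (a : TV) : gimp a a = 1 := gimp_eq_one_iff.mpr le_rfl

lemma gcoimp_self (a : TV) : gcoimp a a = 0 := gcoimp_eq_zero_iff.mpr le_rfl

lemma gimp_zero (a : TV) : gimp a 0 = if a = 0 then 1 else 0 := by
  simp [gimp]

lemma gcoimp_one_left (a : TV) : gcoimp 1 a = if a = 1 then 0 else 1 := by
  simp [gcoimp, unitInterval.le_one'.ge_iff_eq]

end GoedelOperations

section Valuation

variable {W : Type} (R : W → W → Prop) (v : ℕ → W → TV × TV) (w : W)

lemma kval_fone : kval R v fone w = (1, 0) := by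
  simp [fone, kval, gimp_self, gcoimp_self]

lemma kval_fzero : kval R v fzero w = (0, 1) := by
  simp [fzero, kval, gimp_self, gcoimp_self]

lemma kval_fnegG (φ : Formula) :
    kval R v (fnegG φ) w = (gimp (kval R v φ w).1 0, gcoimp 1 (kval R v φ w).2) := by
  simp [fnegG, kval, kval_fzero]

lemma kval_imp_eq_one_zero_iff (φ ψ : Formula) :
    kval R v (.imp φ ψ) w = (1, 0) ↔
      (kval R v φ w).1 ≤ (kval R v ψ w).1 ∧ (kval R v ψ w).2 ≤ (kval R v φ w).2 := by
  simp [kval, Prod.ext_iff, gimp_eq_one_iff, gcoimp_eq_zero_iff]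

lemma kval_fDeltaNeg (φ : Formula) :
    kval R v (fDeltaNeg φ) w = if kval R v φ w = (1, 0) then (1, 0) else (0, 1) := by
  simp only [fDeltaNeg, kval, kval_fnegG, kval_fone, gimp_zero, gcoimp_one_left]
  obtain ⟨a, b⟩ := kval R v φ w
  by_cases ha : a = 1 <;> by_cases hb : b = 0 <;> simp [ha, hb]

lemma kval_or_fDeltaNeg_of_ne {φ ψ : Formula} (hφ : kval R v φ w ≠ (1, 0))
    (hψ : kval R v ψ w ≠ (1, 0)) :
    kval R v (.or (fDeltaNeg φ) (fDeltaNeg ψ)) w = (0, 1) := by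
  rw [kval, kval_fDeltaNeg, kval_fDeltaNeg, if_neg hφ, if_neg hψ]
  simp

lemma kval_or_fDeltaNeg_imp_of_lt {φ ψ : Formula} (h₁ : (kval R v ψ w).1 < (kval R v φ w).1)
    (h₂ : (kval R v ψ w).2 < (kval R v φ w).2) :
    kval R v (.or (fDeltaNeg (.imp φ ψ)) (fDeltaNeg (.imp ψ φ))) w = (0, 1) :=
  kval_or_fDeltaNeg_of_ne R v w
    (fun h => h₁.not_ge ((kval_imp_eq_one_zero_iff R v w φ ψ).mp h).1)
    (fun h => h₂.not_ge ((kval_imp_eq_one_zero_iff R v w ψ φ).mp h).2)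

end Valuation

/-- `Δ^¬(p→q) ∨ Δ^¬(q→p)` is not KG²-valid: whenever `v(p,w) = (0.7,0.6)` and
`v(q,w) = (0.4,0.2)`, its value is `(0,1) ≠ (1,0)`. -/
theorem stmt13 :
    (∀ (W : Type), Nonempty W → ∀ (R : W → W → Prop) (v : ℕ → W → TV × TV) (w : W),
      (((v 0 w).1 : ℝ) = 0.7 ∧ ((v 0 w).2 : ℝ) = 0.6 ∧
       ((v 1 w).1 : ℝ) = 0.4 ∧ ((v 1 w).2 : ℝ) = 0.2) →
      (kval R v (.or (fDeltaNeg (.imp (.var 0) (.var 1)))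
          (fDeltaNeg (.imp (.var 1) (.var 0)))) w).1 = 0 ∧
      (kval R v (.or (fDeltaNeg (.imp (.var 0) (.var 1)))
          (fDeltaNeg (.imp (.var 1) (.var 0)))) w).2 = 1) ∧
    ¬ (∀ (W : Type), Nonempty W → ∀ (R : W → W → Prop) (v : ℕ → W → TV × TV) (w : W),
        (kval R v (.or (fDeltaNeg (.imp (.var 0) (.var 1)))
            (fDeltaNeg (.imp (.var 1) (.var 0)))) w).1 = 1 ∧
        (kval R v (.or (fDeltaNeg (.imp (.var 0) (.var 1)))
            (fDeltaNeg (.imp (.var 1) (.var 0)))) w).2 = 0) := by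
  have value : ∀ (W : Type) (R : W → W → Prop) (v : ℕ → W → TV × TV) (w : W),
      ((v 0 w).1 : ℝ) = 0.7 → ((v 0 w).2 : ℝ) = 0.6 →
      ((v 1 w).1 : ℝ) = 0.4 → ((v 1 w).2 : ℝ) = 0.2 →
      kval R v (.or (fDeltaNeg (.imp (.var 0) (.var 1)))
        (fDeltaNeg (.imp (.var 1) (.var 0)))) w = (0, 1) := by
    intro W R v w hp₁ hp₂ hq₁ hq₂
    apply kval_or_fDeltaNeg_imp_of_lt <;>
      simp only [kval, ← Subtype.coe_lt_coe, hp₁, hp₂, hq₁, hq₂] <;> norm_num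
  refine ⟨fun W _ R v w ⟨hp₁, hp₂, hq₁, hq₂⟩ => Prod.ext_iff.mp (value W R v w hp₁ hp₂ hq₁ hq₂), ?_⟩
  intro valid
  let v : ℕ → Unit → TV × TV := fun n _ =>
    if n = 0 then (⟨0.7, by norm_num⟩, ⟨0.6, by norm_num⟩)
    else (⟨0.4, by norm_num⟩, ⟨0.2, by norm_num⟩)
  have h₀ := congrArg Prod.fst (value Unit (fun _ _ => False) v () rfl rfl rfl rfl)
  exact zero_ne_one (h₀.symm.trans (valid Unit ⟨()⟩ (fun _ _ => False) v ()).1)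
end
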